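/- arXiv:math/0605459 — 2 statements merged into one kernel-verified Lean document; each statement's English description precedes it below -/
import Mathlib

section
/- Let B = (P, N, m, φ) be a quantum background, let A, B', C be parameter rings with morphisms α: A → C and β: B' → C, and let A×_C B' = {(a,b) : α(a) = β(b)} be the fibered product parameter ring. Then the natural map η: QM_B(A×_C B') → QM_B(A) ×_{QM_B(C)} QM_B(B') is a bijection. (In other words, the functor QM_B satisfies the Schlessinger condition.) -/
noncomputable section

open TensorProduct DirectSum

/-- The parity (sign) operator of a ℤ-graded module: `x ↦ (-1)^{|x|} x` on homogeneous
elements, extended linearly. -/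
def parityOp {R M : Type*} [CommRing R] [AddCommGroup M] [Module R M]
    (g : ℤ → Submodule R M) [DirectSum.Decomposition g] : M →ₗ[R] M :=
  ((DirectSum.decomposeLinearEquiv g).symm.toLinearMap).comp
    ((DFinsupp.mapRange.linearMap
      (fun i => ((Int.negOnePow i : ℤ) • (LinearMap.id : g i →ₗ[R] g i)))).comp
      (DirectSum.decomposeLinearEquiv g).toLinearMap)

/-- Projection of a ℤ-graded module onto its even part. -/
def evenOp {R M : Type*} [CommRing R] [AddCommGroup M] [Module R M]
    (g : ℤ → Submodule R M) [DirectSum.Decomposition g] : M →ₗ[R] M :=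
  ((DirectSum.decomposeLinearEquiv g).symm.toLinearMap).comp
    ((DFinsupp.mapRange.linearMap
      (fun i => ((if Even i then (1:ℤ) else 0) • (LinearMap.id : g i →ₗ[R] g i)))).comp
      (DirectSum.decomposeLinearEquiv g).toLinearMap)

/-- Projection of a ℤ-graded module onto its odd part. -/
def oddOp {R M : Type*} [CommRing R] [AddCommGroup M] [Module R M]
    (g : ℤ → Submodule R M) [DirectSum.Decomposition g] : M →ₗ[R] M :=
  ((DirectSum.decomposeLinearEquiv g).symm.toLinearMap).comp
    ((DFinsupp.mapRange.linearMap
      (fun i => ((if Even i then (0:ℤ) else 1) • (LinearMap.id : g i →ₗ[R] g i)))).comp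
      (DirectSum.decomposeLinearEquiv g).toLinearMap)

/-- All the properties making `(A, aG, mA, dA)` a parameter ring: a differential graded
Artin local `Λ = k[[ℏ]]`-algebra with residue field `k`:
graded-commutative, with (two-sided, graded) nilpotent maximal ideal `mA`,
finite-dimensional over `k`, residue field `k`, and a degree-one square-zero
derivation `dA`. -/
structure IsParamRing (k : Type) [Field k] (A : Type) [Ring A]
    [Algebra (PowerSeries k) A] (aG : ℤ → Submodule (PowerSeries k) A)
    [GradedAlgebra aG]
    (mA : Submodule (PowerSeries k) A) (dA : A →ₗ[PowerSeries k] A) : Prop where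
  /-- graded commutativity of `A` -/
  gcomm : ∀ (i j : ℤ) (a b : A), a ∈ aG i → b ∈ aG j →
    a * b = ((Int.negOnePow (i * j) : ℤ)) • (b * a)
  /-- `mA` is a two-sided ideal -/
  mul_mem_left : ∀ (x : A) (a : A), a ∈ mA → x * a ∈ mA
  mul_mem_right : ∀ (x : A) (a : A), a ∈ mA → a * x ∈ mA
  /-- `mA` is nilpotent -/
  nilpotent : ∃ n : ℕ, ∀ l : List A, (∀ x ∈ l, x ∈ mA) → l.length = n → l.prod = 0
  /-- `A` is local with maximal ideal `mA` -/
  local' : ∀ a : A, a ∈ mA ∨ IsUnit a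
  one_not_mem : (1 : A) ∉ mA
  /-- the residue field is `k` -/
  residue : ∀ a : A, ∃ c : k, a - algebraMap (PowerSeries k) A (PowerSeries.C (R := k) c) ∈ mA
  /-- `A` (equivalently, its maximal ideal) is finite dimensional over `k` -/
  findim : ∃ s : Finset A, ∀ x : A, ∃ c : A → k,
    x = ∑ y ∈ s, algebraMap (PowerSeries k) A (PowerSeries.C (R := k) (c y)) * y
  /-- the maximal ideal is graded -/
  max_graded : ∀ a ∈ mA, ∀ i : ℤ,
    ((DirectSum.decompose aG a i : aG i) : A) ∈ mA
  /-- `dA` is a degree-one derivation with `dA² = 0` -/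
  d_graded : ∀ (i : ℤ), ∀ a ∈ aG i, dA a ∈ aG (i + 1)
  leibniz : ∀ (i : ℤ) (a b : A), a ∈ aG i →
    dA (a * b) = dA a * b + ((Int.negOnePow i : ℤ)) • (a * dA b)
  dd : ∀ a : A, dA (dA a) = 0

section Background

variable {k : Type} [Field k] [CharZero k]
  -- the ring `P` of a quantum background
  {P : Type} [Ring P] [Algebra (PowerSeries k) P]
  (pG : ℤ → Submodule (PowerSeries k) P) [GradedAlgebra pG]
  -- the module `N` of a quantum background
  {N : Type} [AddCommGroup N] [Module (PowerSeries k) N] [Module P N]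
  [IsScalarTower (PowerSeries k) P N] [SMulCommClass (PowerSeries k) P N]
  (nG : ℤ → Submodule (PowerSeries k) N) [DirectSum.Decomposition nG]
  -- the divided bracket `[·,·]/ℏ` of the classical limit of `P`
  (divB : P →ₗ[PowerSeries k] P →ₗ[PowerSeries k] P)
  -- structure and vacuum
  (m : P) (φ : N)
  -- a parameter ring `(A, dA)` with maximal ideal `mA`
  {A : Type} [Ring A] [Algebra (PowerSeries k) A]
  (aG : ℤ → Submodule (PowerSeries k) A) [GradedAlgebra aG]
  (mA : Submodule (PowerSeries k) A)
  (dA : A →ₗ[PowerSeries k] A)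

/-- All the properties making `(P, N, m, φ)` (together with the grading data and the
divided bracket `divB`) a quantum background: `P` is graded with classical limit,
witnessed by the divided bracket `divB = [·,·]/ℏ` (so that
`ℏ • divB α β = αβ - (-1)^{|α||β|} βα`, i.e. `P/ℏP` is graded-commutative),
`N` is a graded `P`-module, `m ∈ P¹` with `m² = 0`, and `φ ∈ N⁰` with `mφ = 0`. -/
structure IsBackground : Prop where
  divB_spec : ∀ (i j : ℤ) (α β : P), α ∈ pG i → β ∈ pG j →
    (PowerSeries.X : PowerSeries k) • divB α β
      = α * β - ((Int.negOnePow (i * j) : ℤ)) • (β * α)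
  m_mem : m ∈ pG 1
  m_sq : m * m = 0
  vac_mem : φ ∈ nG 0
  m_vac : m • φ = 0
  act_graded : ∀ (i j : ℤ) (p : P) (n : N), p ∈ pG i → n ∈ nG j → p • n ∈ nG (i + j)

/-- The action of `P` on `N`, as a `Λ`-bilinear map. -/
def actP : P →ₗ[PowerSeries k] N →ₗ[PowerSeries k] N where
  toFun p :=
    { toFun := fun n => p • n
      map_add' := fun x y => smul_add p x y
      map_smul' := fun c n => (smul_comm c p n).symm }
  map_add' p q := by ext n; exact add_smul p q n
  map_smul' c p := by ext n; exact smul_assoc c p n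

/-- `p ↦ p • φ`. -/
def toVac : P →ₗ[PowerSeries k] N := (actP (k := k) (P := P) (N := N)).flip φ

/-- The divided bracket `[·,·]/ℏ` extended to `P ⊗_Λ A` with Koszul signs:
`[α⊗a, β⊗b]/ℏ = (-1)^{|a||β|} ([α,β]/ℏ) ⊗ (ab)`. -/
def dbA : (P ⊗[PowerSeries k] A) →ₗ[PowerSeries k]
    (P ⊗[PowerSeries k] A) →ₗ[PowerSeries k] (P ⊗[PowerSeries k] A) :=
  (TensorProduct.homTensorHomMap (RingHom.id (PowerSeries k)) P A P A).comp
      (TensorProduct.map divB ((LinearMap.mul (PowerSeries k) A).comp (evenOp aG)))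
    + (TensorProduct.homTensorHomMap (RingHom.id (PowerSeries k)) P A P A).comp
      (TensorProduct.map (divB.compl₂ (parityOp pG))
        ((LinearMap.mul (PowerSeries k) A).comp (oddOp aG)))

/-- The action of `P ⊗_Λ A` on `N ⊗_Λ A` with Koszul signs:
`(p⊗a) • (n⊗b) = (-1)^{|a||n|} (p•n) ⊗ (ab)`. -/
def actPA : (P ⊗[PowerSeries k] A) →ₗ[PowerSeries k]
    (N ⊗[PowerSeries k] A) →ₗ[PowerSeries k] (N ⊗[PowerSeries k] A) :=
  (TensorProduct.homTensorHomMap (RingHom.id (PowerSeries k)) N A N A).comp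
      (TensorProduct.map (actP (k := k) (P := P) (N := N))
        ((LinearMap.mul (PowerSeries k) A).comp (evenOp aG)))
    + (TensorProduct.homTensorHomMap (RingHom.id (PowerSeries k)) N A N A).comp
      (TensorProduct.map ((actP (k := k) (P := P) (N := N)).compl₂ (parityOp nG))
        ((LinearMap.mul (PowerSeries k) A).comp (oddOp aG)))

/-- `x ↦ x • (φ ⊗ 1)`, sending `P ⊗_Λ A` onto the cyclic submodule `C_A = (P ⊗_Λ A)φ`
of `N ⊗_Λ A` generated by the vacuum (`φ` has degree `0`, so no signs occur). -/
def actVac : (P ⊗[PowerSeries k] A) →ₗ[PowerSeries k] (N ⊗[PowerSeries k] A) :=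
  LinearMap.rTensor A (toVac (k := k) (P := P) φ)

/-- The cyclic submodule `C_A = (P ⊗_Λ A)φ ⊆ N ⊗_Λ A` generated by the vacuum. -/
def cyclicSub : Submodule (PowerSeries k) (N ⊗[PowerSeries k] A) :=
  LinearMap.range (actVac (k := k) (P := P) (A := A) φ)

/-- The degree-zero part `(P ⊗_Λ 𝔪_A)⁰` of `P ⊗ 𝔪_A`. -/
def degZeroMax : Submodule (PowerSeries k) (P ⊗[PowerSeries k] A) :=
  Submodule.span (PowerSeries k)
    {x | ∃ i : ℤ, ∃ p ∈ pG i, ∃ a : A,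
      a ∈ aG (-i) ∧ a ∈ mA ∧ x = p ⊗ₜ[PowerSeries k] a}

/-- `e^{π/ℏ} m e^{-π/ℏ} := Σ_{j≥0} (1/j!) ([-,π]/ℏ)^j (m)`, the sum truncated at `n`
(all terms with `j ≥ n` vanish for suitable `n` since `𝔪_A` is nilpotent). -/
def expConj (π : P ⊗[PowerSeries k] A) (n : ℕ) : P ⊗[PowerSeries k] A :=
  ∑ j ∈ Finset.range n,
    algebraMap k (PowerSeries k) ((j.factorial : k)⁻¹) •
      (((dbA pG divB aG).flip π ^ j) (m ⊗ₜ (1 : A)))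

/-- `d_A π`, i.e. `(1 ⊗ d_A) π` with the Koszul sign `(-1)^{|p|} p ⊗ d_A a`. -/
def dPi (π : P ⊗[PowerSeries k] A) : P ⊗[PowerSeries k] A :=
  TensorProduct.map (parityOp pG) dA π

/-- `ℏ e^{π/ℏ} d_A(e^{-π/ℏ}) := Σ_{j≥0} (1/(j+1)!) ([-,π]/ℏ)^j (d_A π)`, truncated at
`n`. -/
def expD (π : P ⊗[PowerSeries k] A) (n : ℕ) : P ⊗[PowerSeries k] A :=
  ∑ j ∈ Finset.range n,
    algebraMap k (PowerSeries k) (((j+1).factorial : k)⁻¹) •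
      (((dbA pG divB aG).flip π ^ j) (dPi pG dA π))

/-- The quantum master equation for a quantum background `(P, N, m, φ)` over the
parameter ring `(A, dA)`:  `π` is an element of `(P ⊗ 𝔪_A)⁰` such that
`(e^{π/ℏ} m e^{-π/ℏ} - ℏ e^{π/ℏ} d_A(e^{-π/ℏ})) φ = 0`.  The exponential sums are
finite: all iterated divided brackets vanish from some stage `n` onwards, because
`𝔪_A` is nilpotent. -/
def IsQMSol (π : P ⊗[PowerSeries k] A) : Prop :=
  π ∈ degZeroMax pG aG mA ∧
  ∃ n : ℕ,
    (∀ j ≥ n, ((dbA pG divB aG).flip π ^ j) (m ⊗ₜ (1 : A)) = 0 ∧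
      ((dbA pG divB aG).flip π ^ j) (dPi pG dA π) = 0) ∧
    actVac (k := k) (A := A) φ
      (expConj pG divB m aG π n - expD pG divB aG dA π n) = 0

end Background


/-!
Since `P` and `N` are free, hence flat, over `Λ`, tensoring with them preserves the fibre
product `F = A ×_C B'`: the projections stay jointly injective on `P ⊗ F` and `N ⊗ F`, and a
pair `(π_A, π_B)` agreeing in `P ⊗ C` lifts to `P ⊗ F`. The same argument applied to each
graded piece `P^i` (a direct summand of `P`, so again flat) and to the fibre product
`(F^{-i} ∩ 𝔪_F) = (A^{-i} ∩ 𝔪_A) ×_C (B'^{-i} ∩ 𝔪_{B'})` shows that the lift lies in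
`(P ⊗ 𝔪_F)⁰`. Every operation in the quantum master equation commutes with base change along
a graded morphism of parameter rings, so the equation for the lift is detected on its two
projections.
-/

namespace LinearMap

variable {R M N P Q : Type*} [CommRing R] [AddCommGroup M] [Module R M] [AddCommGroup N]
  [Module R N] [AddCommGroup P] [Module R P] [AddCommGroup Q] [Module R Q]

theorem lTensor_rTensor_comm_apply (f : M →ₗ[R] P) (g : N →ₗ[R] Q) (x : M ⊗[R] N) :
    lTensor P g (rTensor N f x) = rTensor Q f (lTensor M g x) := by
  rw [← comp_apply, ← comp_apply, lTensor_comp_rTensor, rTensor_comp_lTensor]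

end LinearMap


section GradedComponent

open DirectSum

variable {R M X : Type*} [CommRing R] [AddCommGroup M] [Module R M] [AddCommGroup X] [Module R X]
  (g : ℤ → Submodule R M) [Decomposition g]

def gradedComponent (i : ℤ) : M →ₗ[R] g i :=
  component R ℤ (fun j => g j) i ∘ₗ (decomposeLinearEquiv g).toLinearMap

theorem gradedComponent_apply (i : ℤ) (x : M) : gradedComponent g i x = decompose g x i := rfl

theorem gradedComponent_comp_subtype (i : ℤ) :
    gradedComponent g i ∘ₗ (g i).subtype = LinearMap.id :=
  LinearMap.ext fun x => by simp [gradedComponent_apply, decompose_coe]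

theorem gradedComponent_comp_subtype_of_ne {i j : ℤ} (h : j ≠ i) :
    gradedComponent g i ∘ₗ (g j).subtype = 0 :=
  LinearMap.ext fun x => Subtype.ext (decompose_of_mem_ne g x.2 h)

theorem Module.Flat.of_decomposition [Module.Flat R M] (i : ℤ) : Module.Flat R (g i) :=
  Module.Flat.of_retract _ _ (gradedComponent_comp_subtype g i)

theorem exists_finset_sum_rTensor_gradedComponent_eq (u : M ⊗[R] X) :
    ∃ s : Finset ℤ, ∀ t ⊇ s,
      ∑ i ∈ t, (g i).subtype.rTensor X ((gradedComponent g i).rTensor X u) = u := by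
  classical
  induction u using TensorProduct.induction_on with
  | zero => exact ⟨∅, fun t _ => by simp⟩
  | tmul p x =>
    refine ⟨(decompose g p).support, fun t ht => ?_⟩
    simp only [LinearMap.rTensor_tmul, Submodule.subtype_apply, gradedComponent_apply,
      ← TensorProduct.sum_tmul]
    rw [← Finset.sum_subset ht fun i _ hi => by simp [DFinsupp.notMem_support_iff.mp hi],
      sum_support_decompose]
  | add u v hu hv =>
    obtain ⟨s, hs⟩ := hu
    obtain ⟨s', hs'⟩ := hv
    refine ⟨s ∪ s', fun t ht => ?_⟩
    simp only [map_add, Finset.sum_add_distrib]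
    rw [hs t (Finset.union_subset_left ht), hs' t (Finset.union_subset_right ht)]

theorem mem_iSup_range_map_subtype_iff (K : ℤ → Submodule R X) (u : M ⊗[R] X) :
    u ∈ ⨆ i, LinearMap.range (TensorProduct.map (g i).subtype (K i).subtype) ↔
      ∀ i, (gradedComponent g i).rTensor X u ∈ LinearMap.range ((K i).subtype.lTensor (g i)) := by
  constructor
  · intro hu i
    refine (iSup_le (fun j => ?_) :
      _ ≤ ((K i).subtype.lTensor (g i)).range.comap ((gradedComponent g i).rTensor X)) hu
    rintro _ ⟨w, rfl⟩
    rw [Submodule.mem_comap, LinearMap.rTensor_map]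
    rcases eq_or_ne j i with rfl | hji
    · rw [gradedComponent_comp_subtype]
      exact ⟨w, rfl⟩
    · rw [gradedComponent_comp_subtype_of_ne g hji, TensorProduct.map_zero_left]
      exact zero_mem _
  · intro hu
    obtain ⟨s, hs⟩ := exists_finset_sum_rTensor_gradedComponent_eq g u
    rw [← hs s subset_rfl]
    refine Submodule.sum_mem _ fun i _ => Submodule.mem_iSup_of_mem i ?_
    obtain ⟨w, hw⟩ := hu i
    exact ⟨w, by rw [← hw, ← LinearMap.comp_apply, LinearMap.rTensor_comp_lTensor]⟩

end GradedComponent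

section FiberProduct

variable {R M F A B C : Type*} [CommRing R] [AddCommGroup M] [Module R M]
  [AddCommGroup F] [Module R F] [AddCommGroup A] [Module R A] [AddCommGroup B] [Module R B]
  [AddCommGroup C] [Module R C]
  {fA : F →ₗ[R] A} {fB : F →ₗ[R] B} {gA : A →ₗ[R] C} {gB : B →ₗ[R] C}

theorem LinearMap.exact_prod_coprod_neg (hcomm : ∀ x, gA (fA x) = gB (fB x))
    (hpairs : ∀ a b, gA a = gB b → ∃ x, fA x = a ∧ fB x = b) :
    Function.Exact (fA.prod fB) (gA.coprod (-gB)) := by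
  rintro ⟨a, b⟩
  simp only [LinearMap.coprod_apply, LinearMap.neg_apply, ← sub_eq_add_neg, sub_eq_zero,
    Set.mem_range, LinearMap.prod_apply, Function.prod, Prod.mk.injEq]
  exact ⟨hpairs a b, fun ⟨x, hxa, hxb⟩ => hxa ▸ hxb ▸ hcomm x⟩

variable [Module.Flat R M]

theorem Module.Flat.lTensor_prod_injective (h : Function.Injective (fA.prod fB)) :
    Function.Injective ((fA.lTensor M).prod (fB.lTensor M)) := by
  have e : (fA.lTensor M).prod (fB.lTensor M)
      = (TensorProduct.prodRight R R M A B).toLinearMap ∘ₗ (fA.prod fB).lTensor M :=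
    TensorProduct.ext' fun _ _ => rfl
  rw [e]
  exact (TensorProduct.prodRight R R M A B).injective.comp
    (lTensor_preserves_injective_linearMap _ h)

theorem Module.Flat.eq_zero_of_lTensor_eq_zero (h : Function.Injective (fA.prod fB))
    {u : M ⊗[R] F} (hA : fA.lTensor M u = 0) (hB : fB.lTensor M u = 0) : u = 0 :=
  (injective_iff_map_eq_zero _).1 (lTensor_prod_injective h) u (Prod.ext hA hB)

theorem Module.Flat.lTensor_prod_coprod_exact
    (h : Function.Exact (fA.prod fB) (gA.coprod (-gB))) :
    Function.Exact ((fA.lTensor M).prod (fB.lTensor M)) ((gA.lTensor M).coprod (-gB.lTensor M)) :=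
  Function.Exact.of_ladder_linearEquiv_of_exact (e₁ := LinearEquiv.refl R _)
    (e₂ := TensorProduct.prodRight R R M A B) (e₃ := LinearEquiv.refl R _)
    (TensorProduct.ext' fun _ _ => rfl) (by ext <;> simp [TensorProduct.tmul_neg])
    (lTensor_exact M h)

theorem Module.Flat.exists_lTensor_eq_of_fiberProduct (hcomm : ∀ x, gA (fA x) = gB (fB x))
    (hpairs : ∀ a b, gA a = gB b → ∃ x, fA x = a ∧ fB x = b) {u : M ⊗[R] A} {v : M ⊗[R] B}
    (h : gA.lTensor M u = gB.lTensor M v) :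
    ∃ w, fA.lTensor M w = u ∧ fB.lTensor M w = v := by
  obtain ⟨w, hw⟩ := (lTensor_prod_coprod_exact (M := M)
    (LinearMap.exact_prod_coprod_neg hcomm hpairs) (u, v)).1 (by simp [h])
  exact ⟨w, congrArg Prod.fst hw, congrArg Prod.snd hw⟩

theorem Module.Flat.mem_range_lTensor_subtype_of_fiberProduct
    {KF : Submodule R F} {KA : Submodule R A} {KB : Submodule R B}
    (hinj : Function.Injective (fA.prod fB)) (hcomm : ∀ x, gA (fA x) = gB (fB x))
    (hpairs : ∀ a b, gA a = gB b → ∃ x, fA x = a ∧ fB x = b)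
    (hK : ∀ x, x ∈ KF ↔ fA x ∈ KA ∧ fB x ∈ KB) {y : M ⊗[R] F}
    (hyA : fA.lTensor M y ∈ LinearMap.range (KA.subtype.lTensor M))
    (hyB : fB.lTensor M y ∈ LinearMap.range (KB.subtype.lTensor M)) :
    y ∈ LinearMap.range (KF.subtype.lTensor M) := by
  obtain ⟨u, hu⟩ := hyA
  obtain ⟨v, hv⟩ := hyB
  let fA' : KF →ₗ[R] KA := fA.restrict fun x hx => ((hK x).1 hx).1
  let fB' : KF →ₗ[R] KB := fB.restrict fun x hx => ((hK x).1 hx).2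
  have hpairs' : ∀ a b, (gA ∘ₗ KA.subtype) a = (gB ∘ₗ KB.subtype) b →
      ∃ x, fA' x = a ∧ fB' x = b := by
    intro a b hab
    obtain ⟨x, hxa, hxb⟩ := hpairs a b hab
    exact ⟨⟨x, (hK x).2 ⟨hxa ▸ a.2, hxb ▸ b.2⟩⟩, Subtype.ext hxa, Subtype.ext hxb⟩
  have huv : (gA ∘ₗ KA.subtype).lTensor M u = (gB ∘ₗ KB.subtype).lTensor M v := by
    rw [LinearMap.lTensor_comp_apply, hu, LinearMap.lTensor_comp_apply, hv,
      ← LinearMap.lTensor_comp_apply, ← LinearMap.lTensor_comp_apply]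
    congr 2
    exact LinearMap.ext hcomm
  obtain ⟨w, hwA, hwB⟩ :=
    exists_lTensor_eq_of_fiberProduct (fA := fA') (fB := fB') (fun x => hcomm x) hpairs' huv
  refine ⟨w, lTensor_prod_injective hinj (Prod.ext ?_ ?_)⟩
  · change fA.lTensor M (KF.subtype.lTensor M w) = fA.lTensor M y
    rw [← LinearMap.lTensor_comp_apply, show fA ∘ₗ KF.subtype = KA.subtype ∘ₗ fA' from rfl,
      LinearMap.lTensor_comp_apply, hwA, hu]
  · change fB.lTensor M (KF.subtype.lTensor M w) = fB.lTensor M y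
    rw [← LinearMap.lTensor_comp_apply, show fB ∘ₗ KF.subtype = KB.subtype ∘ₗ fB' from rfl,
      LinearMap.lTensor_comp_apply, hwB, hv]

theorem Module.Flat.mem_iSup_range_map_subtype_of_fiberProduct (g : ℤ → Submodule R M) [DirectSum.Decomposition g]
    {KF : ℤ → Submodule R F} {KA : ℤ → Submodule R A} {KB : ℤ → Submodule R B}
    (hinj : Function.Injective (fA.prod fB)) (hcomm : ∀ x, gA (fA x) = gB (fB x))
    (hpairs : ∀ a b, gA a = gB b → ∃ x, fA x = a ∧ fB x = b)
    (hK : ∀ i x, x ∈ KF i ↔ fA x ∈ KA i ∧ fB x ∈ KB i) {y : M ⊗[R] F}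
    (hyA : fA.lTensor M y ∈ ⨆ i, LinearMap.range (TensorProduct.map (g i).subtype (KA i).subtype))
    (hyB : fB.lTensor M y ∈ ⨆ i, LinearMap.range (TensorProduct.map (g i).subtype (KB i).subtype)) :
    y ∈ ⨆ i, LinearMap.range (TensorProduct.map (g i).subtype (KF i).subtype) := by
  rw [mem_iSup_range_map_subtype_iff] at hyA hyB ⊢
  intro i
  have := Module.Flat.of_decomposition g i
  refine mem_range_lTensor_subtype_of_fiberProduct hinj hcomm hpairs (hK i) ?_ ?_
  · rw [LinearMap.lTensor_rTensor_comm_apply]; exact hyA i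
  · rw [LinearMap.lTensor_rTensor_comm_apply]; exact hyB i

end FiberProduct

theorem degZeroMax_eq_iSup {k : Type} [Field k] {P : Type} [Ring P] [Algebra (PowerSeries k) P]
    (pG : ℤ → Submodule (PowerSeries k) P) {A : Type} [Ring A] [Algebra (PowerSeries k) A]
    (aG : ℤ → Submodule (PowerSeries k) A) (mA : Submodule (PowerSeries k) A) :
    degZeroMax pG aG mA =
      ⨆ i, LinearMap.range (TensorProduct.map (pG i).subtype (aG (-i) ⊓ mA).subtype) := by
  simp_rw [TensorProduct.range_map_eq_span_tmul, ← Submodule.span_iUnion, degZeroMax]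
  congr 1
  ext x
  simp only [Set.mem_ofPred_eq, Set.mem_iUnion, Subtype.exists, Submodule.coe_subtype,
    Submodule.mem_inf, exists_prop]
  constructor
  · rintro ⟨i, p, hp, a, ha, haM, rfl⟩
    exact ⟨i, p, hp, a, ⟨ha, haM⟩, rfl⟩
  · rintro ⟨i, p, hp, a, ⟨ha, haM⟩, rfl⟩
    exact ⟨i, p, hp, a, ha, haM, rfl⟩

theorem mem_degZeroMax_of_fiberProduct {k : Type} [Field k] {P : Type} [Ring P]
    [Algebra (PowerSeries k) P] [Module.Flat (PowerSeries k) P]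
    (pG : ℤ → Submodule (PowerSeries k) P) [GradedAlgebra pG]
    {A B C F : Type} [Ring A] [Algebra (PowerSeries k) A] [Ring B] [Algebra (PowerSeries k) B]
    [AddCommGroup C] [Module (PowerSeries k) C] [Ring F] [Algebra (PowerSeries k) F]
    {aG : ℤ → Submodule (PowerSeries k) A} {bG : ℤ → Submodule (PowerSeries k) B}
    {fG : ℤ → Submodule (PowerSeries k) F} {mA : Submodule (PowerSeries k) A}
    {mB : Submodule (PowerSeries k) B} {mF : Submodule (PowerSeries k) F}
    {fA : F →ₗ[PowerSeries k] A} {fB : F →ₗ[PowerSeries k] B}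
    {gA : A →ₗ[PowerSeries k] C} {gB : B →ₗ[PowerSeries k] C}
    (hinj : Function.Injective (fA.prod fB)) (hcomm : ∀ x, gA (fA x) = gB (fB x))
    (hpairs : ∀ a b, gA a = gB b → ∃ x, fA x = a ∧ fB x = b)
    (hgrade : ∀ i x, x ∈ fG i ↔ fA x ∈ aG i ∧ fB x ∈ bG i)
    (hmax : ∀ x, x ∈ mF ↔ fA x ∈ mA ∧ fB x ∈ mB) {π : P ⊗[PowerSeries k] F}
    (hA : fA.lTensor P π ∈ degZeroMax pG aG mA) (hB : fB.lTensor P π ∈ degZeroMax pG bG mB) :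
    π ∈ degZeroMax pG fG mF := by
  rw [degZeroMax_eq_iSup] at hA hB ⊢
  refine Module.Flat.mem_iSup_range_map_subtype_of_fiberProduct pG hinj hcomm hpairs
    (fun i x => ?_) hA hB
  simp only [Submodule.mem_inf, hgrade, hmax]
  tauto

section GradedScale

open DirectSum

variable {R M M' : Type*} [CommRing R] [AddCommGroup M] [Module R M] [AddCommGroup M']
  [Module R M'] {g : ℤ → Submodule R M} [Decomposition g] {g' : ℤ → Submodule R M'}
  [Decomposition g']

variable (g) in
/-- `parityOp`, `evenOp` and `oddOp` are definitionally of this form. -/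
def gradedScale (c : ℤ → ℤ) : M →ₗ[R] M :=
  (decomposeLinearEquiv g).symm.toLinearMap ∘ₗ
    DFinsupp.mapRange.linearMap (fun i => c i • (LinearMap.id : g i →ₗ[R] g i)) ∘ₗ
      (decomposeLinearEquiv g).toLinearMap

theorem gradedScale_apply_of_mem (c : ℤ → ℤ) {i : ℤ} {x : M} (hx : x ∈ g i) :
    gradedScale g c x = c i • x := by
  change (decompose g).symm (DFinsupp.mapRange.linearMap
    (fun i => c i • (LinearMap.id : g i →ₗ[R] g i)) (decompose g x)) = _
  rw [decompose_of_mem g hx, DFinsupp.mapRange.linearMap_apply]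
  erw [DFinsupp.mapRange_single, decompose_symm_of]
  simp

theorem map_gradedScale {T : Type*} [FunLike T M M'] [AddMonoidHomClass T M M'] (τ : T)
    (hτ : ∀ i, ∀ x ∈ g i, τ x ∈ g' i) (c : ℤ → ℤ) (x : M) :
    τ (gradedScale g c x) = gradedScale g' c (τ x) := by
  induction x using Decomposition.inductionOn g with
  | zero => simp
  | homogeneous x =>
    rw [gradedScale_apply_of_mem c x.2, gradedScale_apply_of_mem c (hτ _ _ x.2), map_zsmul]
  | add x y hx hy => simp only [map_add, hx, hy]

theorem map_evenOp {T : Type*} [FunLike T M M'] [AddMonoidHomClass T M M'] (τ : T)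
    (hτ : ∀ i, ∀ x ∈ g i, τ x ∈ g' i) (x : M) : τ (evenOp g x) = evenOp g' (τ x) :=
  map_gradedScale τ hτ _ x

theorem map_oddOp {T : Type*} [FunLike T M M'] [AddMonoidHomClass T M M'] (τ : T)
    (hτ : ∀ i, ∀ x ∈ g i, τ x ∈ g' i) (x : M) : τ (oddOp g x) = oddOp g' (τ x) :=
  map_gradedScale τ hτ _ x

end GradedScale

section Naturality

variable {k : Type} [Field k]
  {P : Type} [Ring P] [Algebra (PowerSeries k) P]
  (pG : ℤ → Submodule (PowerSeries k) P) [GradedAlgebra pG]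
  (divB : P →ₗ[PowerSeries k] P →ₗ[PowerSeries k] P) (m : P)
  {A : Type} [Ring A] [Algebra (PowerSeries k) A]
  {aG : ℤ → Submodule (PowerSeries k) A} [GradedAlgebra aG]
  {B : Type} [Ring B] [Algebra (PowerSeries k) B]
  {bG : ℤ → Submodule (PowerSeries k) B} [GradedAlgebra bG]
  {τ : A →ₐ[PowerSeries k] B}

variable (aG) in
theorem dbA_tmul (p q : P) (a b : A) :
    dbA pG divB aG (p ⊗ₜ a) (q ⊗ₜ b)
      = divB p q ⊗ₜ (evenOp aG a * b) + divB p (parityOp pG q) ⊗ₜ (oddOp aG a * b) := by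
  simp [dbA, TensorProduct.homTensorHomMap_apply]

theorem lTensor_dbA (hτ : ∀ i, ∀ a ∈ aG i, τ a ∈ bG i) (x y : P ⊗[PowerSeries k] A) :
    τ.toLinearMap.lTensor P (dbA pG divB aG x y)
      = dbA pG divB bG (τ.toLinearMap.lTensor P x) (τ.toLinearMap.lTensor P y) := by
  induction x using TensorProduct.induction_on with
  | zero => simp
  | add x x' hx hx' => simp only [map_add, LinearMap.add_apply, hx, hx']
  | tmul p a =>
    induction y using TensorProduct.induction_on with
    | zero => simp
    | add y y' hy hy' => simp only [map_add, hy, hy']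
    | tmul q b =>
      simp only [dbA_tmul, map_add, LinearMap.lTensor_tmul, AlgHom.toLinearMap_apply, map_mul,
        map_evenOp τ hτ, map_oddOp τ hτ]

theorem lTensor_dbA_flip_pow (hτ : ∀ i, ∀ a ∈ aG i, τ a ∈ bG i) (π : P ⊗[PowerSeries k] A)
    (j : ℕ) (x : P ⊗[PowerSeries k] A) :
    τ.toLinearMap.lTensor P (((dbA pG divB aG).flip π ^ j) x)
      = ((dbA pG divB bG).flip (τ.toLinearMap.lTensor P π) ^ j) (τ.toLinearMap.lTensor P x) := by
  induction j generalizing x with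
  | zero => rfl
  | succ j ih =>
    rw [pow_succ', pow_succ', Module.End.mul_apply, Module.End.mul_apply, LinearMap.flip_apply,
      LinearMap.flip_apply, lTensor_dbA pG divB hτ, ih]

theorem lTensor_tmul_one (p : P) :
    τ.toLinearMap.lTensor P (p ⊗ₜ[PowerSeries k] (1 : A)) = p ⊗ₜ 1 := by
  simp

theorem lTensor_dPi {dA : A →ₗ[PowerSeries k] A} {dB : B →ₗ[PowerSeries k] B}
    (hd : ∀ a, τ (dA a) = dB (τ a)) (π : P ⊗[PowerSeries k] A) :
    τ.toLinearMap.lTensor P (dPi pG dA π) = dPi pG dB (τ.toLinearMap.lTensor P π) := by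
  have hd' : τ.toLinearMap ∘ₗ dA = dB ∘ₗ τ.toLinearMap := LinearMap.ext hd
  rw [dPi, dPi, LinearMap.lTensor_map, hd', ← LinearMap.map_lTensor]

theorem lTensor_expConj (hτ : ∀ i, ∀ a ∈ aG i, τ a ∈ bG i) (π : P ⊗[PowerSeries k] A) (n : ℕ) :
    τ.toLinearMap.lTensor P (expConj pG divB m aG π n)
      = expConj pG divB m bG (τ.toLinearMap.lTensor P π) n := by
  simp only [expConj, map_sum, map_smul, lTensor_dbA_flip_pow pG divB hτ, lTensor_tmul_one]

theorem lTensor_expD (hτ : ∀ i, ∀ a ∈ aG i, τ a ∈ bG i) {dA : A →ₗ[PowerSeries k] A}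
    {dB : B →ₗ[PowerSeries k] B} (hd : ∀ a, τ (dA a) = dB (τ a)) (π : P ⊗[PowerSeries k] A)
    (n : ℕ) :
    τ.toLinearMap.lTensor P (expD pG divB aG dA π n)
      = expD pG divB bG dB (τ.toLinearMap.lTensor P π) n := by
  simp only [expD, map_sum, map_smul, lTensor_dbA_flip_pow pG divB hτ, lTensor_dPi pG hd]

theorem lTensor_actVac {N : Type} [AddCommGroup N] [Module (PowerSeries k) N] [Module P N]
    [IsScalarTower (PowerSeries k) P N] [SMulCommClass (PowerSeries k) P N] (φ : N)
    (x : P ⊗[PowerSeries k] A) :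
    τ.toLinearMap.lTensor N (actVac φ x) = actVac φ (τ.toLinearMap.lTensor P x) :=
  LinearMap.lTensor_rTensor_comm_apply _ _ x

end Naturality

section QuantumMasterEquation

variable {k : Type} [Field k]
  {P : Type} [Ring P] [Algebra (PowerSeries k) P]
  (pG : ℤ → Submodule (PowerSeries k) P) [GradedAlgebra pG]
  {N : Type} [AddCommGroup N] [Module (PowerSeries k) N] [Module P N]
  [IsScalarTower (PowerSeries k) P N] [SMulCommClass (PowerSeries k) P N]
  (divB : P →ₗ[PowerSeries k] P →ₗ[PowerSeries k] P) (m : P) (φ : N)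
  {A : Type} [Ring A] [Algebra (PowerSeries k) A]
  (aG : ℤ → Submodule (PowerSeries k) A) [GradedAlgebra aG] (dA : A →ₗ[PowerSeries k] A)

/-- The part of `IsQMSol` beyond the degree condition, with the exponential sums truncated
at `n`. -/
def QMEHoldsAt (π : P ⊗[PowerSeries k] A) (n : ℕ) : Prop :=
  (∀ j ≥ n, ((dbA pG divB aG).flip π ^ j) (m ⊗ₜ (1 : A)) = 0 ∧
    ((dbA pG divB aG).flip π ^ j) (dPi pG dA π) = 0) ∧
  actVac φ (expConj pG divB m aG π n - expD pG divB aG dA π n) = 0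

variable {pG divB m φ aG dA}

theorem QMEHoldsAt.mono {π : P ⊗[PowerSeries k] A} {n n' : ℕ}
    (h : QMEHoldsAt pG divB m φ aG dA π n) (hn : n ≤ n') :
    QMEHoldsAt pG divB m φ aG dA π n' := by
  refine ⟨fun j hj => h.1 j (hn.trans hj), ?_⟩
  rw [expConj, expD,
    Finset.eventually_constant_sum (fun j hj => by rw [(h.1 j hj).1, smul_zero]) hn,
    Finset.eventually_constant_sum (fun j hj => by rw [(h.1 j hj).2, smul_zero]) hn]
  exact h.2

variable [Module.Flat (PowerSeries k) P] [Module.Flat (PowerSeries k) N]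
  {B : Type} [Ring B] [Algebra (PowerSeries k) B]
  {bG : ℤ → Submodule (PowerSeries k) B} [GradedAlgebra bG] {dB : B →ₗ[PowerSeries k] B}
  {F : Type} [Ring F] [Algebra (PowerSeries k) F]
  {fG : ℤ → Submodule (PowerSeries k) F} [GradedAlgebra fG] {dF : F →ₗ[PowerSeries k] F}
  {fA : F →ₐ[PowerSeries k] A} {fB : F →ₐ[PowerSeries k] B}

theorem qmeHoldsAt_of_lTensor (hinj : Function.Injective (fA.toLinearMap.prod fB.toLinearMap))
    (hfA : ∀ i, ∀ x ∈ fG i, fA x ∈ aG i) (hfB : ∀ i, ∀ x ∈ fG i, fB x ∈ bG i)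
    (hdA : ∀ x, fA (dF x) = dA (fA x)) (hdB : ∀ x, fB (dF x) = dB (fB x))
    {π : P ⊗[PowerSeries k] F} {n : ℕ}
    (hA : QMEHoldsAt pG divB m φ aG dA (fA.toLinearMap.lTensor P π) n)
    (hB : QMEHoldsAt pG divB m φ bG dB (fB.toLinearMap.lTensor P π) n) :
    QMEHoldsAt pG divB m φ fG dF π n := by
  refine ⟨fun j hj => ⟨?_, ?_⟩, ?_⟩
  · refine Module.Flat.eq_zero_of_lTensor_eq_zero hinj ?_ ?_
    · rw [lTensor_dbA_flip_pow pG divB hfA, lTensor_tmul_one]; exact (hA.1 j hj).1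
    · rw [lTensor_dbA_flip_pow pG divB hfB, lTensor_tmul_one]; exact (hB.1 j hj).1
  · refine Module.Flat.eq_zero_of_lTensor_eq_zero hinj ?_ ?_
    · rw [lTensor_dbA_flip_pow pG divB hfA, lTensor_dPi pG hdA]; exact (hA.1 j hj).2
    · rw [lTensor_dbA_flip_pow pG divB hfB, lTensor_dPi pG hdB]; exact (hB.1 j hj).2
  · refine Module.Flat.eq_zero_of_lTensor_eq_zero hinj ?_ ?_
    · rw [lTensor_actVac, map_sub, lTensor_expConj pG divB m hfA, lTensor_expD pG divB hfA hdA]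
      exact hA.2
    · rw [lTensor_actVac, map_sub, lTensor_expConj pG divB m hfB, lTensor_expD pG divB hfB hdB]
      exact hB.2

theorem isQMSol_of_lTensor {mA : Submodule (PowerSeries k) A} {mB : Submodule (PowerSeries k) B}
    {mF : Submodule (PowerSeries k) F}
    (hinj : Function.Injective (fA.toLinearMap.prod fB.toLinearMap))
    (hfA : ∀ i, ∀ x ∈ fG i, fA x ∈ aG i) (hfB : ∀ i, ∀ x ∈ fG i, fB x ∈ bG i)
    (hdA : ∀ x, fA (dF x) = dA (fA x)) (hdB : ∀ x, fB (dF x) = dB (fB x))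
    {π : P ⊗[PowerSeries k] F} (hπ : π ∈ degZeroMax pG fG mF)
    (hA : IsQMSol pG divB m φ aG mA dA (fA.toLinearMap.lTensor P π))
    (hB : IsQMSol pG divB m φ bG mB dB (fB.toLinearMap.lTensor P π)) :
    IsQMSol pG divB m φ fG mF dF π := by
  obtain ⟨-, nA, hnA⟩ := hA
  obtain ⟨-, nB, hnB⟩ := hB
  exact ⟨hπ, max nA nB, qmeHoldsAt_of_lTensor hinj hfA hfB hdA hdB
    (QMEHoldsAt.mono hnA (le_max_left nA nB)) (QMEHoldsAt.mono hnB (le_max_right nA nB))⟩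

end QuantumMasterEquation

section Statements
variable {k : Type} [Field k] [CharZero k]
  {P : Type} [Ring P] [Algebra (PowerSeries k) P]
  (pG : ℤ → Submodule (PowerSeries k) P) [GradedAlgebra pG]
  [Module.Free (PowerSeries k) P]
  {N : Type} [AddCommGroup N] [Module (PowerSeries k) N] [Module P N]
  [IsScalarTower (PowerSeries k) P N] [SMulCommClass (PowerSeries k) P N]
  [Module.Free (PowerSeries k) N]
  (nG : ℤ → Submodule (PowerSeries k) N) [DirectSum.Decomposition nG]
  (divB : P →ₗ[PowerSeries k] P →ₗ[PowerSeries k] P)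
  (m : P) (φ : N)

theorem quantum_backgrounds_statement_3
    -- the parameter rings `A`, `B'`, `C`, and the fibered product `F = A ×_C B'`
    {A : Type} [Ring A] [Algebra (PowerSeries k) A]
    (aG : ℤ → Submodule (PowerSeries k) A) [GradedAlgebra aG]
    (mA : Submodule (PowerSeries k) A) (dA : A →ₗ[PowerSeries k] A)
    {B' : Type} [Ring B'] [Algebra (PowerSeries k) B']
    (bG : ℤ → Submodule (PowerSeries k) B') [GradedAlgebra bG]
    (mB : Submodule (PowerSeries k) B') (dB : B' →ₗ[PowerSeries k] B')
    {C : Type} [Ring C] [Algebra (PowerSeries k) C]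
    {F : Type} [Ring F] [Algebra (PowerSeries k) F]
    (fG : ℤ → Submodule (PowerSeries k) F) [GradedAlgebra fG]
    (mF : Submodule (PowerSeries k) F) (dF : F →ₗ[PowerSeries k] F)
    -- the morphisms `α : A → C` and `β : B' → C` of parameter rings
    (α : A →ₐ[PowerSeries k] C) (β : B' →ₐ[PowerSeries k] C)
    -- `F` is the fibered product `A ×_C B'`:
    (prA : F →ₐ[PowerSeries k] A) (prB : F →ₐ[PowerSeries k] B')
    (hprA_graded : ∀ (i : ℤ), ∀ x ∈ fG i, prA x ∈ aG i)
    (hprA_d : ∀ x, prA (dF x) = dA (prA x))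
    (hprB_graded : ∀ (i : ℤ), ∀ x ∈ fG i, prB x ∈ bG i)
    (hprB_d : ∀ x, prB (dF x) = dB (prB x))
    (hcomm : ∀ x : F, α (prA x) = β (prB x))
    (hinj : ∀ x y : F, prA x = prA y → prB x = prB y → x = y)
    (hpairs : ∀ (a : A) (b : B'), α a = β b → ∃ x : F, prA x = a ∧ prB x = b)
    (hgrade : ∀ (i : ℤ) (x : F), x ∈ fG i ↔ prA x ∈ aG i ∧ prB x ∈ bG i)
    (hmax : ∀ x : F, x ∈ mF ↔ prA x ∈ mA ∧ prB x ∈ mB) :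
    -- Conclusion: `η : QM_B(F) → QM_B(A) ×_{QM_B(C)} QM_B(B')` is bijective:
    -- `η` is injective, and
    (∀ π π' : P ⊗[PowerSeries k] F,
        IsQMSol pG divB m φ fG mF dF π → IsQMSol pG divB m φ fG mF dF π' →
        LinearMap.lTensor P prA.toLinearMap π = LinearMap.lTensor P prA.toLinearMap π' →
        LinearMap.lTensor P prB.toLinearMap π = LinearMap.lTensor P prB.toLinearMap π' →
        π = π')
    -- `η` is surjective onto the fibered product of sets:
    ∧ (∀ (πa : P ⊗[PowerSeries k] A) (πb : P ⊗[PowerSeries k] B'),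
        IsQMSol pG divB m φ aG mA dA πa → IsQMSol pG divB m φ bG mB dB πb →
        LinearMap.lTensor P α.toLinearMap πa = LinearMap.lTensor P β.toLinearMap πb →
        ∃ π : P ⊗[PowerSeries k] F, IsQMSol pG divB m φ fG mF dF π ∧
          LinearMap.lTensor P prA.toLinearMap π = πa ∧
          LinearMap.lTensor P prB.toLinearMap π = πb) := by
  have hinj' : Function.Injective (prA.toLinearMap.prod prB.toLinearMap) :=
    fun x y h => hinj x y (congrArg Prod.fst h) (congrArg Prod.snd h)
  refine ⟨fun π π' _ _ hπA hπB => Module.Flat.lTensor_prod_injective hinj' (Prod.ext hπA hπB), ?_⟩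
  intro πa πb ha hb hab
  obtain ⟨π, rfl, rfl⟩ := Module.Flat.exists_lTensor_eq_of_fiberProduct (fA := prA.toLinearMap)
    (fB := prB.toLinearMap) (gA := α.toLinearMap) (gB := β.toLinearMap) hcomm hpairs hab
  have hπ := mem_degZeroMax_of_fiberProduct pG (gA := α.toLinearMap) (gB := β.toLinearMap)
    hinj' hcomm hpairs hgrade hmax ha.1 hb.1
  exact ⟨π, isQMSol_of_lTensor hinj' hprA_graded hprB_graded hprA_d hprB_d hπ ha hb, rfl, rfl⟩

end Statements
end
end

section
/- Let B be a smooth formal quantum background with representing couple (R, Π) (zero differential), maps Φ⁰ and A¹ as above, and ∫ a path integral pairing for B. Then the one-point correlation function ∫Φ⁰: H → R satisfies ℏ d_dR ∫Φ⁰ = A¹ ∫Φ⁰; consequently the two-point correlation functions ⟨Z_j, Z_i⟩ := ∫ ℏ² Z_j Z_i (e^{−Π/ℏ}) φ are determined by A¹ and the one-point functions via ⟨Z_j, Z_i⟩ = (A¹ ⟨Φ⁰(Z_i)⟩)(Z_j), the connection one-form A¹ applied to ⟨Φ⁰(Z_i)⟩ := ∫Φ⁰(Z_i) and contracted with the tangent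 vector Z_j ∈ H. -/
/-!  Common setting for the flat quantum superconnection of a smooth formal quantum
background `B` with representing couple `(R, Π)` (zero differential).

* `R = k[[ℏ, H*]]` is the (pro-)parameter ring representing `QFT_B`; we work with an
  abstract commutative `Λ = k[[ℏ]]`-algebra `R` equipped with the pairwise commuting
  derivations `∂ i = ∂/∂t_i` in the coordinates `t_1, …, t_r` dual to a basis
  `x_1, …, x_r` of the (finite dimensional) homology `H = H(B)`;
  `ℏ` denotes the image of `PowerSeries.X` in `R`.
* `C` is the cyclic module `C_Π = (P ⊗_Λ R) Uφ` (`U = e^{-Π/ℏ}`), an `R`-module;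
  `dm : C → C` is its differential (left multiplication by `m`), and
  `hd i : C → C` is the operator `ℏ∂_i` (i.e. `ψ = xUφ ↦ ℏ∂_i(xU)U⁻¹Uφ`), a
  square-commuting family of `ℏ`-derivations over `∂ i` commuting with `dm`;
  `D_Π = H(C_Π, m)`.
* `φ0 i = Φ⁰(x_i) = ℏ ∂_i(U) φ ∈ C` are `m`-closed and `R`-independent, and
  `C = R·Φ⁰(H) ⊕ E` is a Hodge decomposition with `(E, m)` an acyclic subcomplex.
* Differential forms: `Ω = R[[H*[1]]]`; since `H*[1]` is spanned by the `r` odd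
  generators `dt_i`, an element of `Ω` (resp. of `C_Π ⊗_R Ω`) is modelled as a
  function `Finset (Fin r) → R` (resp. `→ C`), recording the coefficient of each
  wedge monomial `dt_S`; `Ωⁿ` corresponds to functions supported on `n`-element sets.
  `hdR`/`hdC` denote `ℏ·d_dR` (the de Rham differential, combined with `ℏ`).
* Since `D_Π ≅ H ⊗_k R` is free on the classes `[φ0 i]`, maps
  `Aⁿ : D_Π → D_Π ⊗_R Ωⁿ` are recorded as matrices `A n : Fin r → Fin r → Ω` of
  `n`-forms in this basis, and maps `Φⁿ : H → E ⊗_R Ωⁿ` as vectors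
  `Φ n : Fin r → (Finset (Fin r) → C)` of `E`-valued `n`-forms.  -/

noncomputable section

namespace QBSuperconn

variable {k : Type} [Field k] [CharZero k]
  {R : Type} [CommRing R] [Algebra (PowerSeries k) R]
  {C : Type} [AddCommGroup C] [Module R C]
  {r : ℕ}

/-- the image of `ℏ` in `R` -/
def hbar (k : Type) [Field k] [CharZero k] (R : Type) [CommRing R]
    [Algebra (PowerSeries k) R] : R :=
  algebraMap (PowerSeries k) R PowerSeries.X

/-- The Koszul sign of interleaving the wedge monomial `dt_T` in front of `dt_S`. -/
def kSign (T S : Finset (Fin r)) : ℤ :=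
  (-1 : ℤ) ^ (∑ t ∈ T, (S.filter fun s => s < t).card)

/-- The wedge product of (`R`-valued) differential forms. -/
def wedgeR (ω η : Finset (Fin r) → R) : Finset (Fin r) → R :=
  fun S => ∑ T ∈ S.powerset, kSign T (S \ T) • (ω T * η (S \ T))

/-- The wedge product of a scalar form with a `C`-valued form. -/
def wedgeC (ω : Finset (Fin r) → R) (ψ : Finset (Fin r) → C) : Finset (Fin r) → C :=
  fun S => ∑ T ∈ S.powerset, kSign T (S \ T) • (ω T • ψ (S \ T))

/-- `ℏ d_dR` on scalar forms, built from the derivations `∂ i` of `R`. -/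
def hdR (pd : Fin r → (R →ₗ[PowerSeries k] R)) (ω : Finset (Fin r) → R) :
    Finset (Fin r) → R :=
  fun S => ∑ i ∈ S, ((-1 : ℤ) ^ (((S.erase i).filter fun s => s < i).card)) •
    (hbar k R * pd i (ω (S.erase i)))

/-- `ℏ d_dR` on `C`-valued forms, built from the operators `hd i = ℏ∂_i` on `C`. -/
def hdC (hd : Fin r → (C →+ C)) (ψ : Finset (Fin r) → C) : Finset (Fin r) → C :=
  fun S => ∑ i ∈ S, ((-1 : ℤ) ^ (((S.erase i).filter fun s => s < i).card)) •
    (hd i (ψ (S.erase i)))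

/-- a form is homogeneous of degree `n` when it is supported on `n`-element subsets -/
def homog {M : Type} [Zero M] (ω : Finset (Fin r) → M) (n : ℕ) : Prop :=
  ∀ S : Finset (Fin r), S.card ≠ n → ω S = 0

/-- matrix product of matrices of forms (with wedge product of entries) -/
def mProd (X Y : Fin r → Fin r → (Finset (Fin r) → R)) :
    Fin r → Fin r → (Finset (Fin r) → R) :=
  fun a b => ∑ c, wedgeR (X a c) (Y c b)

/-- action of a matrix of forms on a vector of `C`-valued forms -/
def mVec (X : Fin r → Fin r → (Finset (Fin r) → R))
    (v : Fin r → (Finset (Fin r) → C)) : Fin r → (Finset (Fin r) → C) :=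
  fun a => ∑ c, wedgeC (X a c) (v c)

/-- `Φ⁰` as a vector of `C`-valued `0`-forms: `Φ⁰(x_a) = φ0 a`. -/
def phi0Form (φ0 : Fin r → C) : Fin r → (Finset (Fin r) → C) :=
  fun a S => if S = (∅ : Finset (Fin r)) then φ0 a else 0

/-- All the standing assumptions on the data `(R, ∂, C, dm, hd, φ0, E)` extracted
from a smooth formal quantum background with representing couple `(R, Π)` with zero
differential and a Hodge decomposition `C_Π = R·Φ⁰(H) ⊕ E` with `(E, m)` acyclic. -/
structure Setting (pd : Fin r → (R →ₗ[PowerSeries k] R)) (dm : C →ₗ[R] C)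
    (hd : Fin r → (C →+ C)) (φ0 : Fin r → C) (E : Submodule R C) : Prop where
  /-- the `∂ i` are pairwise commuting derivations of `R` -/
  pd_leibniz : ∀ (i : Fin r) (a b : R), pd i (a * b) = pd i a * b + a * pd i b
  pd_comm : ∀ (i j : Fin r) (a : R), pd i (pd j a) = pd j (pd i a)
  /-- `dm` (left multiplication by `m`) is a differential -/
  dm_sq : ∀ c : C, dm (dm c) = 0
  /-- `hd i` is `ℏ∂_i`: an `ℏ`-derivation over `∂ i` ... -/
  hd_leibniz : ∀ (i : Fin r) (a : R) (c : C),
    hd i (a • c) = (hbar k R * pd i a) • c + a • hd i c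
  /-- ... commuting with `dm` and with each other -/
  hd_dm : ∀ (i : Fin r) (c : C), hd i (dm c) = dm (hd i c)
  hd_comm : ∀ (i j : Fin r) (c : C), hd i (hd j c) = hd j (hd i c)
  /-- the `φ0 i = Φ⁰(x_i)` are `m`-closed -/
  phi0_closed : ∀ i, dm (φ0 i) = 0
  /-- `R·Φ⁰(H)` is free on the `φ0 i` -/
  phi0_indep : ∀ c : Fin r → R, (∑ i, c i • φ0 i) = 0 → ∀ i, c i = 0
  /-- Hodge decomposition `C_Π = R·Φ⁰(H) ⊕ E` -/
  hodge : IsCompl (Submodule.span R (Set.range φ0)) E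
  /-- `E` is a subcomplex ... -/
  E_stable : ∀ e ∈ E, dm e ∈ E
  /-- ... which is acyclic -/
  E_acyclic : ∀ e ∈ E, dm e = 0 → ∃ e' ∈ E, dm e' = e


/-- the constant (degree-zero) form with value `f` -/
def const0 {M : Type} [Zero M] (f : M) : Finset (Fin r) → M :=
  fun S => if S = (∅ : Finset (Fin r)) then f else 0

/-- STATEMENT 15.  Let `B` be a smooth formal quantum background with representing
couple `(R, Π)` (zero differential), maps `Φ⁰` and `A¹` as above (i.e. `A¹`, `Φ¹` are
the unique maps with `ℏ d_dR Φ⁰ = A¹Φ⁰ + mΦ¹` for the chosen Hodge decomposition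
`C_Π = R·Φ⁰(H) ⊕ E`), and `∫` a path integral pairing for `B` (recorded as the
`R`-linear `intC : C_Π → R` with `∫ ∘ m = 0`, commuting with differentiation in the
moduli directions).  Then the one-point correlation function `∫Φ⁰ : H → R` satisfies
`ℏ d_dR ∫Φ⁰ = A¹ ∫Φ⁰`; consequently the two-point correlation functions
`⟨Z_j, Z_i⟩ := ∫ ℏ² Z_j Z_i (e^{-Π/ℏ}) φ  (= ∫ ℏ∂_j (Φ⁰(Z_i)))` are determined by
`A¹` and the one-point functions: `⟨Z_j, Z_i⟩ = (A¹ ⟨Φ⁰(Z_i)⟩)(Z_j)`, the connection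
one-form `A¹` applied to `⟨Φ⁰(Z_i)⟩ = ∫Φ⁰(Z_i)` and contracted with the tangent
vector `Z_j ∈ H`. -/
theorem quantum_backgrounds_statement_15
    (pd : Fin r → (R →ₗ[PowerSeries k] R)) (dm : C →ₗ[R] C)
    (hd : Fin r → (C →+ C)) (φ0 : Fin r → C) (E : Submodule R C)
    (hset : Setting pd dm hd φ0 E)
    -- `A¹` (a matrix of one-forms) and `Φ¹` (a vector of `E`-valued one-forms)
    -- with `ℏ d_dR Φ⁰ = A¹Φ⁰ + mΦ¹`:
    (A1 : Fin r → Fin r → (Finset (Fin r) → R))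
    (Φ1 : Fin r → (Finset (Fin r) → C))
    (hA1homog : ∀ a b : Fin r, homog (A1 a b) 1)
    (hΦ1E : ∀ (a : Fin r) (S : Finset (Fin r)), Φ1 a S ∈ E)
    (hΦ1homog : ∀ a : Fin r, homog (Φ1 a) 1)
    (heq0 : ∀ a : Fin r,
      hdC hd (phi0Form φ0 a)
        = (∑ c, wedgeC (A1 a c) (phi0Form φ0 c)) + fun S => dm (Φ1 a S))
    -- the path integral pairing:
    (intC : C →ₗ[R] R)
    (hStokes : ∀ c : C, intC (dm c) = 0)
    (hIntD : ∀ (i : Fin r) (c : C), intC (hd i c) = hbar k R * pd i (intC c)) :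
    -- Conclusion: `ℏ d_dR ∫Φ⁰ = A¹ ∫Φ⁰` ...
    (∀ a : Fin r,
      hdR pd (const0 (intC (φ0 a)))
        = ∑ c, wedgeR (A1 a c) (const0 (intC (φ0 c))))
    -- ... and hence `⟨Z_j, Z_i⟩ = (A¹ ⟨Φ⁰(Z_i)⟩)(Z_j)`:
    ∧ (∀ i j : Fin r,
        intC (hd j (φ0 i)) = ∑ c, A1 i c {j} * intC (φ0 c)) := by
  have key : ∀ a j : Fin r, intC (hd j (φ0 a)) = ∑ c, A1 a c {j} * intC (φ0 c) := by
    intro a j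
    have hL : hdC hd (phi0Form φ0 a) {j} = hd j (φ0 a) := by
      simp [hdC, phi0Form, Finset.erase_singleton]
    have hR : ∀ c, wedgeC (A1 a c) (phi0Form φ0 c) {j} = A1 a c {j} • φ0 c := by
      intro c
      have hp : ({j} : Finset (Fin r)).powerset = {∅, {j}} := by
        ext T; simp [Finset.subset_singleton_iff]
      rw [wedgeC, hp, Finset.sum_pair (Ne.symm (Finset.singleton_ne_empty j))]
      simp [phi0Form, kSign]
    have h := congrFun (heq0 a) {j}
    rw [hL] at h
    rw [h]
    simp only [Pi.add_apply, Finset.sum_apply, map_add, map_sum, hStokes, add_zero]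
    refine Finset.sum_congr rfl fun c _ => ?_
    rw [hR c, map_smul, smul_eq_mul]
  constructor
  · intro a
    funext S
    by_cases h1 : S.card = 1
    · obtain ⟨j, rfl⟩ := Finset.card_eq_one.mp h1
      have hL : hdR pd (const0 (intC (φ0 a))) {j} = hbar k R * pd j (intC (φ0 a)) := by
        simp [hdR, const0, Finset.erase_singleton]
      have hR : ∀ c, wedgeR (A1 a c) (const0 (intC (φ0 c))) {j}
          = A1 a c {j} * intC (φ0 c) := by
        intro c
        have hp : ({j} : Finset (Fin r)).powerset = {∅, {j}} := by
          ext T; simp [Finset.subset_singleton_iff]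
        rw [wedgeR, hp, Finset.sum_pair (Ne.symm (Finset.singleton_ne_empty j))]
        simp [const0, kSign]
      rw [Finset.sum_apply]
      simp only [hR]
      rw [hL, ← hIntD, key a j]
    · have hL : hdR pd (const0 (intC (φ0 a))) S = 0 := by
        rw [hdR]
        refine Finset.sum_eq_zero fun i hi => ?_
        have : S.erase i ≠ ∅ := by
          intro he
          apply h1
          have := Finset.card_erase_of_mem hi
          rw [he, Finset.card_empty] at this
          have h2 := Finset.card_pos.mpr ⟨i, hi⟩
          omega
        simp [const0, this]
      have hR : ∀ c, wedgeR (A1 a c) (const0 (intC (φ0 c))) S = 0 := by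
        intro c
        rw [wedgeR]
        refine Finset.sum_eq_zero fun T hT => ?_
        by_cases hc : T.card = 1
        · have hne : S \ T ≠ ∅ := by
            intro he
            apply h1
            have hTS := Finset.mem_powerset.mp hT
            have : S = T := by
              apply Finset.Subset.antisymm _ hTS
              intro x hx
              by_contra hxT
              exact absurd (Finset.mem_sdiff.mpr ⟨hx, hxT⟩) (by rw [he]; simp)
            rw [this]; exact hc
          simp [const0, hne]
        · rw [hA1homog a c T hc]
          simp
      rw [hL, Finset.sum_apply]
      exact (Finset.sum_eq_zero fun c _ => hR c).symm
  · intro i j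
    exact key i j

end QBSuperconn
end
end
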